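/- arXiv:1803.05150 — 2 statements merged into one kernel-verified Lean document; each statement's English description precedes it below -/
import Mathlib

section
/- Let (ξ_i, F_i)_{i=1..n} be a martingale difference sequence with ξ_i ≥ -1 a.s., S_n = Σξ_i, [S]_n = Σξ_i². Then for all b > 0, M ≥ 1, x > 0: P(S_n/√[S]_n ≥ x and b ≤ √[S]_n ≤ bM) ≤ √e·(1 + 2(1+x)·ln M)·exp{-x²/(2(1 + x/b))}. -/
open MeasureTheory Real Finset


lemma aux_log_ge (l : ℝ) (hl0 : 0 ≤ l) (hl1 : l < 1) (u : ℝ) (hu : -l ≤ u) :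
    u - u ^ 2 / (2 * (1 - l)) ≤ Real.log (1 + u) := by
  have h1l : 0 < 1 - l := by linarith
  set F : ℝ → ℝ := fun u => Real.log (1 + u) - u + u ^ 2 / (2 * (1 - l)) with hF
  have hderiv : ∀ v : ℝ, -1 < v → HasDerivAt F (v * (v + l) / ((1 - l) * (1 + v))) v := by
    intro v hv
    have h1v : (0:ℝ) < 1 + v := by linarith
    have hlog : HasDerivAt (fun u : ℝ => Real.log (1 + u)) (1 + v)⁻¹ v := by
      have := (Real.hasDerivAt_log (ne_of_gt h1v)).comp v ((hasDerivAt_id v).const_add 1)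
      simpa [Function.comp_def] using this
    have h2 : HasDerivAt (fun u : ℝ => u ^ 2 / (2 * (1 - l))) (v / (1 - l)) v := by
      have := (hasDerivAt_pow 2 v).div_const (2 * (1 - l))
      refine this.congr_deriv ?_
      field_simp
      ring
    have := (hlog.sub (hasDerivAt_id v)).add h2
    refine this.congr_deriv ?_
    field_simp
    ring
  have hderivF : ∀ v : ℝ, -1 < v → deriv F v = v * (v + l) / ((1 - l) * (1 + v)) :=
    fun v hv => (hderiv v hv).deriv
  have hcont : ∀ s : Set ℝ, s ⊆ Set.Ioi (-1 : ℝ) → ContinuousOn F s := by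
    intro s hs
    exact fun v hv => ((hderiv v (hs hv)).differentiableAt).continuousAt.continuousWithinAt
  have hmono : MonotoneOn F (Set.Ici (0:ℝ)) := by
    apply monotoneOn_of_deriv_nonneg (convex_Ici 0)
      (hcont _ (fun v hv => lt_of_lt_of_le (show (-1:ℝ) < 0 by norm_num) hv))
    · intro v hv
      rw [interior_Ici] at hv
      exact ((hderiv v (by linarith [Set.mem_Ioi.mp hv])).differentiableAt).differentiableWithinAt
    · intro v hv
      rw [interior_Ici] at hv
      have hv' : (0:ℝ) < v := hv
      rw [hderivF v (by linarith)]
      positivity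
  have hanti : AntitoneOn F (Set.Icc (-l) 0) := by
    apply antitoneOn_of_deriv_nonpos (convex_Icc _ _)
      (hcont _ (fun v hv => by
        have := (Set.mem_Icc.mp hv).1
        exact Set.mem_Ioi.mpr (by linarith)))
    · intro v hv
      rw [interior_Icc] at hv
      obtain ⟨h1, h2⟩ := Set.mem_Ioo.mp hv
      exact ((hderiv v (by linarith)).differentiableAt).differentiableWithinAt
    · intro v hv
      rw [interior_Icc] at hv
      obtain ⟨h1, h2⟩ := Set.mem_Ioo.mp hv
      rw [hderivF v (by linarith)]
      apply div_nonpos_of_nonpos_of_nonneg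
      · nlinarith
      · nlinarith
  have hF0 : F 0 = 0 := by simp [hF]
  have key : 0 ≤ F u := by
    rcases le_total u 0 with h | h
    · have := hanti (Set.mem_Icc.mpr ⟨hu, h⟩) (Set.mem_Icc.mpr ⟨by linarith, le_refl 0⟩) h
      rw [hF0] at this
      exact this
    · have := hmono (Set.mem_Ici.mpr (le_refl (0:ℝ))) (Set.mem_Ici.mpr h) h
      rw [hF0] at this
      exact this
  simp only [hF] at key
  linarith

lemma key_exp_le (l y : ℝ) (hl0 : 0 ≤ l) (hl1 : l < 1) (hy : -1 ≤ y) :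
    Real.exp (l * y - l ^ 2 * y ^ 2 / (2 * (1 - l))) ≤ 1 + l * y := by
  have hu : -l ≤ l * y := by nlinarith
  have h1u : (0:ℝ) < 1 + l * y := by linarith
  have := aux_log_ge l hl0 hl1 (l * y) hu
  calc Real.exp (l * y - l ^ 2 * y ^ 2 / (2 * (1 - l)))
      = Real.exp (l * y - (l * y) ^ 2 / (2 * (1 - l))) := by ring_nf
    _ ≤ Real.exp (Real.log (1 + l * y)) := Real.exp_le_exp.mpr this
    _ = 1 + l * y := Real.exp_log h1u

lemma factor_le (l y : ℝ) (hl0 : 0 ≤ l) (hl1 : l < 1) :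
    l * y - l ^ 2 * y ^ 2 / (2 * (1 - l)) ≤ (1 - l) / 2 := by
  have h1l : 0 < 1 - l := by linarith
  have heq : l * y - l ^ 2 * y ^ 2 / (2 * (1 - l)) - (1 - l) / 2
      = -((l * y - (1 - l)) ^ 2) / (2 * (1 - l)) := by
    field_simp
    ring
  have h2 : -((l * y - (1 - l)) ^ 2) / (2 * (1 - l)) ≤ 0 := by
    apply div_nonpos_of_nonpos_of_nonneg
    · simp [sq_nonneg]
    · positivity
  linarith

lemma integral_prod_exp_le {Ω : Type*} {m0 : MeasurableSpace Ω} (μ : Measure Ω)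
    [IsProbabilityMeasure μ] (n : ℕ) (ℱ : Filtration ℕ m0) (ξ : ℕ → Ω → ℝ)
    (hadapted : ∀ i, 1 ≤ i → i ≤ n → StronglyMeasurable[ℱ i] (ξ i))
    (hsq : ∀ i, 1 ≤ i → i ≤ n → MemLp (ξ i) 2 μ)
    (hcond : ∀ i, 1 ≤ i → i ≤ n → μ[ξ i | ℱ (i - 1)] =ᵐ[μ] 0)
    (hbdd : ∀ i, 1 ≤ i → i ≤ n → ∀ᵐ ω ∂μ, -1 ≤ ξ i ω)
    (l : ℝ) (hl0 : 0 ≤ l) (hl1 : l < 1) :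
    ∀ m, m ≤ n →
      ∫ ω, ∏ i ∈ Icc 1 m, Real.exp (l * ξ i ω - l ^ 2 * (ξ i ω) ^ 2 / (2 * (1 - l))) ∂μ ≤ 1 := by
  set g : ℕ → Ω → ℝ := fun i ω => Real.exp (l * ξ i ω - l ^ 2 * (ξ i ω) ^ 2 / (2 * (1 - l)))
    with hg
  set C : ℝ := Real.exp ((1 - l) / 2) with hC
  have hC1 : 1 ≤ C := by
    rw [hC]
    have := Real.add_one_le_exp ((1 - l) / 2)
    linarith
  have hgpos : ∀ i ω, 0 < g i ω := fun i ω => Real.exp_pos _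
  have hgC : ∀ i ω, g i ω ≤ C := fun i ω =>
    Real.exp_le_exp.mpr (factor_le l (ξ i ω) hl0 hl1)
  have hgm : ∀ i, 1 ≤ i → i ≤ n → Measurable[ℱ i] (g i) := by
    intro i h1 h2
    exact (((measurable_const.mul (hadapted i h1 h2).measurable).sub
      ((measurable_const.mul (((hadapted i h1 h2).measurable).pow measurable_const)).div_const
        _)).exp)
  have hgm0 : ∀ i, 1 ≤ i → i ≤ n → Measurable (g i) := fun i h1 h2 =>
    (hgm i h1 h2).mono (ℱ.le i) le_rfl
  have hgint : ∀ i, 1 ≤ i → i ≤ n → Integrable (g i) μ := by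
    intro i h1 h2
    refine (integrable_const C).mono' ((hgm0 i h1 h2).stronglyMeasurable.aestronglyMeasurable) ?_
    filter_upwards with ω
    rw [Real.norm_eq_abs, abs_of_pos (hgpos i ω)]
    exact hgC i ω
  intro m
  induction m with
  | zero =>
    intro _
    simp
  | succ m ih =>
    intro hmn
    have hm : m ≤ n := le_of_lt (Nat.lt_of_lt_of_le (Nat.lt_succ_self m) hmn)
    have ihm := ih hm
    set P : Ω → ℝ := fun ω => ∏ i ∈ Icc 1 m, g i ω with hP
    have hIcc : Icc 1 (m + 1) = insert (m + 1) (Icc 1 m) := by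
      exact (Finset.insert_Icc_right_eq_Icc_add_one (by omega)).symm
    have hsplit : ∀ ω, ∏ i ∈ Icc 1 (m + 1), g i ω = P ω * g (m + 1) ω := by
      intro ω
      rw [hIcc, Finset.prod_insert (by simp), mul_comm]
    have h1m : 1 ≤ m + 1 := by omega
    -- measurability of P wrt ℱ m
    have hPm : StronglyMeasurable[ℱ m] P := by
      apply Finset.stronglyMeasurable_fun_prod
      intro i hi
      obtain ⟨hi1, hi2⟩ := Finset.mem_Icc.mp hi
      exact ((hgm i hi1 (le_trans hi2 hm)).mono (ℱ.mono hi2) le_rfl).stronglyMeasurable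
    have hPmeas : Measurable P := (hPm.measurable).mono (ℱ.le m) le_rfl
    have hPnonneg : ∀ ω, 0 ≤ P ω :=
      fun ω => Finset.prod_nonneg (fun i _ => (hgpos i ω).le)
    have hPbdd : ∀ ω, P ω ≤ C ^ m := by
      intro ω
      calc P ω ≤ ∏ _i ∈ Icc 1 m, C :=
            Finset.prod_le_prod (fun i _ => (hgpos i ω).le)
              (fun i _ => hgC i ω)
        _ = C ^ m := by rw [Finset.prod_const, Nat.card_Icc]; norm_num
    have hPint : Integrable P μ := by
      refine (integrable_const (C ^ m)).mono' hPmeas.stronglyMeasurable.aestronglyMeasurable ?_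
      filter_upwards with ω
      rw [Real.norm_eq_abs, abs_of_nonneg (hPnonneg ω)]
      exact hPbdd ω
    have hgint' : Integrable (g (m + 1)) μ := hgint _ h1m hmn
    have hPgint : Integrable (P * g (m + 1)) μ := by
      refine (integrable_const (C ^ m * C)).mono'
        ((hPmeas.mul (hgm0 _ h1m hmn)).stronglyMeasurable.aestronglyMeasurable) ?_
      filter_upwards with ω
      rw [Pi.mul_apply, Real.norm_eq_abs, abs_of_nonneg (mul_nonneg (hPnonneg ω) (hgpos _ ω).le)]
      exact mul_le_mul (hPbdd ω) (hgC _ ω) (hgpos _ ω).le (by positivity)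
    -- conditional expectation of g (m+1) is ≤ 1
    have hξint : Integrable (ξ (m + 1)) μ :=
      (hsq _ h1m hmn).integrable (by norm_num)
    have hone : Integrable (fun ω => 1 + l * ξ (m + 1) ω) μ :=
      (integrable_const 1).add (hξint.const_mul l)
    have hle : g (m + 1) ≤ᵐ[μ] fun ω => 1 + l * ξ (m + 1) ω := by
      filter_upwards [hbdd _ h1m hmn] with ω hω
      exact key_exp_le l (ξ (m + 1) ω) hl0 hl1 hω
    have hcondle : μ[g (m + 1) | ℱ m] ≤ᵐ[μ] fun _ => (1:ℝ) := by
      have h1 : μ[g (m + 1) | ℱ m] ≤ᵐ[μ] μ[(fun ω => 1 + l * ξ (m + 1) ω) | ℱ m] :=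
        condExp_mono hgint' hone hle
      have hfeq : (fun ω => 1 + l * ξ (m + 1) ω) = (fun _ : Ω => (1:ℝ)) + l • ξ (m + 1) := by
        funext ω
        simp [smul_eq_mul]
      have h2 : μ[(fun ω => 1 + l * ξ (m + 1) ω) | ℱ m]
          =ᵐ[μ] fun ω => 1 + l * (μ[ξ (m + 1) | ℱ m]) ω := by
        rw [hfeq]
        have ha := condExp_add (m := ℱ m) (μ := μ) (integrable_const (1:ℝ))
          (hξint.smul l)
        have hb := condExp_smul (m := ℱ m) (μ := μ) l (ξ (m + 1))
        have hc := condExp_const (μ := μ) (ℱ.le m) (1:ℝ)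
        filter_upwards [ha, hb] with ω hωa hωb
        rw [Pi.add_apply] at hωa
        rw [hωa, hωb, hc]
        simp [smul_eq_mul]
      have h3 : (fun ω => 1 + l * (μ[ξ (m + 1) | ℱ m]) ω) =ᵐ[μ] fun _ => (1:ℝ) := by
        have := hcond _ h1m hmn
        simp only [Nat.add_sub_cancel] at this
        filter_upwards [this] with ω hω
        simp [hω]
      filter_upwards [h1, h2, h3] with ω hω1 hω2 hω3
      calc (μ[g (m + 1) | ℱ m]) ω
          ≤ (μ[(fun ω => 1 + l * ξ (m + 1) ω) | ℱ m]) ω := hω1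
        _ = 1 + l * (μ[ξ (m + 1) | ℱ m]) ω := hω2
        _ = 1 := hω3
    -- pull-out
    have hpull : μ[P * g (m + 1) | ℱ m] =ᵐ[μ] P * μ[g (m + 1) | ℱ m] :=
      condExp_mul_of_stronglyMeasurable_left hPm hPgint hgint'
    calc ∫ ω, ∏ i ∈ Icc 1 (m + 1), g i ω ∂μ
        = ∫ ω, (P * g (m + 1)) ω ∂μ := by
          congr 1; funext ω; exact hsplit ω
      _ = ∫ ω, (μ[P * g (m + 1) | ℱ m]) ω ∂μ := (integral_condExp (ℱ.le m)).symm
      _ = ∫ ω, P ω * (μ[g (m + 1) | ℱ m]) ω ∂μ := integral_congr_ae hpull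
      _ ≤ ∫ ω, P ω ∂μ := by
          apply integral_mono_ae
          · exact (integrable_condExp.bdd_mul
              hPmeas.stronglyMeasurable.aestronglyMeasurable
              (Filter.Eventually.of_forall (p := fun ω => ‖P ω‖ ≤ C ^ m) fun ω => by
                rw [Real.norm_eq_abs, abs_of_nonneg (hPnonneg ω)]; exact hPbdd ω))
          · exact hPint
          · filter_upwards [hcondle] with ω hω
            calc P ω * (μ[g (m + 1) | ℱ m]) ω ≤ P ω * 1 :=
                  mul_le_mul_of_nonneg_left hω (hPnonneg ω)
              _ = P ω := mul_one _
      _ ≤ 1 := ihm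

lemma slab_poly (x y : ℝ) (hx : 0 < x) (hy : 1 ≤ y) :
    (x^2 - y) * (2*x+y) * (2*x+y+2*(y-1)*x) ≤ 4*x^3*(x+y)*y := by
  nlinarith [sq_nonneg x, sq_nonneg y, sq_nonneg (x-y), sq_nonneg (x+y), sq_nonneg (x*y), mul_pos hx hx, sq_nonneg (x*x - y), mul_nonneg (mul_nonneg hx.le hx.le) (sub_nonneg.mpr hy), sq_nonneg (x*x-x*y), mul_nonneg hx.le (sub_nonneg.mpr hy)]

lemma slab_arith (x t tk : ℝ) (hx : 0 < x) (htk0 : 0 ≤ tk) (htk : tk ≤ t) :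
    x^2/(2*(1+t)) - 1/2 ≤
      2*x^2*(1+(1+t)/x) / ((2+(1+t)/x) * ((2+(1+t)/x) + 2*tk)) := by
  have ht : 0 ≤ t := le_trans htk0 htk
  set y : ℝ := 1 + t with hy
  have hy1 : 1 ≤ y := by simp [hy]; linarith
  have hy0 : 0 < y := by linarith
  have hden1 : (0:ℝ) < 2 + (1+t)/x := by positivity
  have hdenk : (0:ℝ) < (2 + (1+t)/x) * ((2 + (1+t)/x) + 2*tk) := by positivity
  have hdent : (0:ℝ) < (2 + (1+t)/x) * ((2 + (1+t)/x) + 2*t) := by positivity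
  have hnum : (0:ℝ) ≤ 2*x^2*(1+(1+t)/x) := by positivity
  have step1 : 2*x^2*(1+(1+t)/x) / ((2+(1+t)/x) * ((2+(1+t)/x) + 2*t)) ≤
      2*x^2*(1+(1+t)/x) / ((2+(1+t)/x) * ((2+(1+t)/x) + 2*tk)) := by
    apply div_le_div_of_nonneg_left hnum hdenk
    nlinarith
  refine le_trans ?_ step1
  have hEq1 : x^2/(2*(1+t)) - 1/2 = (x^2 - y)/(2*y) := by
    rw [hy]
    field_simp
  have h2xy : (0:ℝ) < 2*x + y := by linarith
  have h2xy2 : (0:ℝ) < 2*x+y+2*(y-1)*x := by nlinarith [mul_nonneg (sub_nonneg.mpr hy1) hx.le]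
  have hEq2 : 2*x^2*(1+(1+t)/x) / ((2+(1+t)/x) * ((2+(1+t)/x) + 2*t)) =
      2*x^3*(x+y) / ((2*x+y) * (2*x+y+2*(y-1)*x)) := by
    rw [hy]
    rw [div_eq_div_iff hdent.ne' (mul_pos h2xy h2xy2).ne']
    field_simp
    ring
  rw [hEq1, hEq2]
  rw [div_le_div_iff₀ (by linarith) (mul_pos h2xy h2xy2)]
  nlinarith [slab_poly x y hx hy1]

lemma logr_ge (x t : ℝ) (hx : 0 < x) (ht : 0 ≤ t) :
    1/(2*(1+x)) ≤ Real.log (1 + (1+t)/x) := by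
  have h1 : (1:ℝ) + 1/x ≤ 1 + (1+t)/x := by
    gcongr
    linarith
  have h0 : (0:ℝ) < 1 + 1/x := by positivity
  have h2 : 1 - (1+1/x)⁻¹ ≤ Real.log (1+1/x) := Real.one_sub_inv_le_log_of_pos h0
  have h3 : 1 - (1+1/x)⁻¹ = 1/(x+1) := by
    field_simp
    ring
  have h4 : 1/(2*(1+x)) ≤ 1/(x+1) := by
    apply div_le_div_of_nonneg_left (by norm_num) (by linarith)
    linarith
  have h5 : Real.log (1+1/x) ≤ Real.log (1 + (1+t)/x) :=
    Real.log_le_log (by positivity) h1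
  linarith

lemma exists_slab (g : ℕ → ℝ) (v : ℝ) :
    ∀ K : ℕ, 0 < K → g 0 ≤ v → v ≤ g K → ∃ k, k < K ∧ g k ≤ v ∧ v ≤ g (k+1) := by
  intro K
  induction K with
  | zero => intro h; omega
  | succ K ih =>
    intro _ h0 hK
    rcases le_or_gt (g K) v with h | h
    · exact ⟨K, Nat.lt_succ_self K, h, hK⟩
    · rcases Nat.eq_zero_or_pos K with rfl | hKpos
      · exact absurd h0 (not_le.mpr h)
      · obtain ⟨k, hk, h1, h2⟩ := ih hKpos h0 h.le
        exact ⟨k, hk.trans (Nat.lt_succ_self K), h1, h2⟩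

lemma sqrt_exp_one : Real.sqrt (Real.exp 1) = Real.exp (1/2) := by
  rw [show Real.exp 1 = Real.exp (1/2) * Real.exp (1/2) by rw [← Real.exp_add]; norm_num,
    Real.sqrt_mul_self (Real.exp_pos _).le]

set_option maxHeartbeats 2000000 in
/-- Deviation inequality for self-normalized martingales: for `b > 0`, `M ≥ 1`,
`x > 0`, `P(S_n/√[S]_n ≥ x, b ≤ √[S]_n ≤ bM) ≤ √e (1 + 2(1+x) ln M) exp{-x²/(2(1+x/b))}`. -/
theorem selfNormalized_deviation {Ω : Type*} {m0 : MeasurableSpace Ω} (μ : Measure Ω)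
    [IsProbabilityMeasure μ] (n : ℕ) (ℱ : Filtration ℕ m0) (ξ : ℕ → Ω → ℝ)
    (hadapted : ∀ i, 1 ≤ i → i ≤ n → StronglyMeasurable[ℱ i] (ξ i))
    (hsq : ∀ i, 1 ≤ i → i ≤ n → MemLp (ξ i) 2 μ)
    (hcond : ∀ i, 1 ≤ i → i ≤ n → μ[ξ i | ℱ (i - 1)] =ᵐ[μ] 0)
    (hbdd : ∀ i, 1 ≤ i → i ≤ n → ∀ᵐ ω ∂μ, -1 ≤ ξ i ω)
    (b M x : ℝ) (hb : 0 < b) (hM : 1 ≤ M) (hx : 0 < x) :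
    (μ {ω | x ≤ (∑ i ∈ Finset.Icc 1 n, ξ i ω) /
          Real.sqrt (∑ i ∈ Finset.Icc 1 n, (ξ i ω) ^ 2) ∧
        b ≤ Real.sqrt (∑ i ∈ Finset.Icc 1 n, (ξ i ω) ^ 2) ∧
        Real.sqrt (∑ i ∈ Finset.Icc 1 n, (ξ i ω) ^ 2) ≤ b * M}).toReal ≤
      Real.sqrt (Real.exp 1) * (1 + 2 * (1 + x) * Real.log M) *
        Real.exp (-x ^ 2 / (2 * (1 + x / b))) := by
  classical
  set S : Ω → ℝ := fun ω => ∑ i ∈ Finset.Icc 1 n, ξ i ω with hS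
  set V : Ω → ℝ := fun ω => ∑ i ∈ Finset.Icc 1 n, (ξ i ω) ^ 2 with hV
  have hξm : ∀ i, 1 ≤ i → i ≤ n → Measurable (ξ i) := fun i h1 h2 =>
    ((hadapted i h1 h2).mono (ℱ.le i)).measurable
  have hSm : Measurable S := by
    apply Finset.measurable_sum
    intro i hi
    obtain ⟨h1, h2⟩ := Finset.mem_Icc.mp hi
    exact hξm i h1 h2
  have hVm : Measurable V := by
    apply Finset.measurable_sum
    intro i hi
    obtain ⟨h1, h2⟩ := Finset.mem_Icc.mp hi
    exact (hξm i h1 h2).pow measurable_const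
  have hV0 : ∀ ω, 0 ≤ V ω := fun ω => Finset.sum_nonneg fun i _ => sq_nonneg _
  -- parameters
  set t : ℝ := x / b with ht
  have ht0 : 0 < t := div_pos hx hb
  set r : ℝ := 1 + (1 + t) / x with hr
  have hr1 : 1 < r := by
    rw [hr]
    have : 0 < (1 + t) / x := by positivity
    linarith
  have hr0 : 0 < r := by linarith
  set K : ℕ := ⌊2 * (1 + x) * Real.log M⌋₊ + 1 with hK
  have hlogM : 0 ≤ Real.log M := Real.log_nonneg hM
  have hKpos : 0 < K := Nat.succ_pos _
  have hKge : 2 * (1 + x) * Real.log M ≤ (K : ℕ) := by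
    push_cast [hK]
    exact (Nat.lt_floor_add_one _).le
  have hKle : (K : ℝ) ≤ 1 + 2 * (1 + x) * Real.log M := by
    push_cast [hK]
    have := Nat.floor_le (show 0 ≤ 2 * (1 + x) * Real.log M by positivity)
    linarith
  set bk : ℕ → ℝ := fun k => b * r ^ k with hbk
  have hbkpos : ∀ k, 0 < bk k := fun k => by positivity
  have hbkb : ∀ k, b ≤ bk k := by
    intro k
    have h1 : (1:ℝ) ≤ r ^ k := one_le_pow₀ hr1.le
    have : b ≤ b * r ^ k := by nlinarith
    exact this
  -- cover bound : b * M ≤ bk K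
  have hcover : b * M ≤ bk K := by
    rw [hbk]
    have h1 : Real.log M ≤ (K : ℝ) * Real.log r := by
      have hlr : 1 / (2 * (1 + x)) ≤ Real.log r := logr_ge x t hx ht0.le
      have h2 : 2 * (1 + x) * Real.log M * (1 / (2 * (1 + x))) ≤ (K : ℝ) * Real.log r := by
        apply mul_le_mul hKge hlr (by positivity) (Nat.cast_nonneg K)
      calc Real.log M = 2 * (1 + x) * Real.log M * (1 / (2 * (1 + x))) := by
            field_simp
        _ ≤ (K : ℝ) * Real.log r := h2
    have hM0 : (0:ℝ) < M := by linarith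
    have : M ≤ r ^ K := by
      calc M = Real.exp (Real.log M) := (Real.exp_log hM0).symm
        _ ≤ Real.exp ((K : ℝ) * Real.log r) := Real.exp_le_exp.mpr h1
        _ = r ^ K := by
            rw [← Real.log_pow, Real.exp_log (pow_pos hr0 K)]
    have : b * M ≤ b * r ^ K := by nlinarith
    exact this
  -- per-slab objects
  set lk : ℕ → ℝ := fun k => 2 * x / (2 * x + bk k * (1 + r)) with hlk
  set fk : ℕ → ℝ := fun k => 2 * x ^ 2 / ((2 * x + bk k * (1 + r)) * (bk k * (1 + r))) with hfk
  have hBpos : ∀ k, 0 < bk k * (1 + r) := fun k => by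
    have := hbkpos k
    nlinarith
  have hlk0 : ∀ k, 0 < lk k := fun k => by
    have := hBpos k
    rw [hlk]
    positivity
  have hlk1 : ∀ k, lk k < 1 := by
    intro k
    rw [hlk, div_lt_one (by nlinarith [hBpos k])]
    nlinarith [hBpos k]
  have hfkpos : ∀ k, 0 < fk k := fun k => by
    have h1 := hBpos k
    rw [hfk]
    have h2 : 0 < 2 * x + bk k * (1 + r) := by nlinarith
    positivity
  have hfklk : ∀ k, fk k = (lk k) ^ 2 / (2 * (1 - lk k)) := by
    intro k
    have h1 := hBpos k
    have h2 : 0 < 2 * x + bk k * (1 + r) := by nlinarith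
    have h3 : 1 - lk k = bk k * (1 + r) / (2 * x + bk k * (1 + r)) := by
      show 1 - 2 * x / (2 * x + bk k * (1 + r)) = _
      field_simp
      ring
    rw [h3]
    show 2 * x ^ 2 / ((2 * x + bk k * (1 + r)) * (bk k * (1 + r))) =
      (2 * x / (2 * x + bk k * (1 + r))) ^ 2 /
        (2 * (bk k * (1 + r) / (2 * x + bk k * (1 + r))))
    field_simp
  have hlxf : ∀ k, lk k * x = fk k * (bk k + bk k * r) := by
    intro k
    have h1 := hBpos k
    have h2 : 0 < 2 * x + bk k * (1 + r) := by nlinarith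
    show 2 * x / (2 * x + bk k * (1 + r)) * x =
      2 * x ^ 2 / ((2 * x + bk k * (1 + r)) * (bk k * (1 + r))) * (bk k + bk k * r)
    have h3 := (hbkpos k).ne'
    field_simp
  -- the exponential supermartingale values
  set G : ℕ → Ω → ℝ := fun k ω => Real.exp (lk k * S ω - fk k * V ω) with hG
  have hexp_eq : ∀ k ω, lk k * S ω - fk k * V ω =
      ∑ i ∈ Finset.Icc 1 n,
        (lk k * ξ i ω - (lk k) ^ 2 * (ξ i ω) ^ 2 / (2 * (1 - lk k))) := by
    intro k ω
    rw [hfklk k]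
    show lk k * (∑ i ∈ Finset.Icc 1 n, ξ i ω) -
        (lk k) ^ 2 / (2 * (1 - lk k)) * (∑ i ∈ Finset.Icc 1 n, (ξ i ω) ^ 2) = _
    rw [Finset.mul_sum, Finset.mul_sum, ← Finset.sum_sub_distrib]
    exact Finset.sum_congr rfl fun i _ => by ring
  have hGprod : ∀ k ω, G k ω = ∏ i ∈ Finset.Icc 1 n,
      Real.exp (lk k * ξ i ω - (lk k) ^ 2 * (ξ i ω) ^ 2 / (2 * (1 - lk k))) := by
    intro k ω
    rw [← Real.exp_sum]
    show Real.exp (lk k * S ω - fk k * V ω) = _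
    rw [hexp_eq k ω]
  have hGpos : ∀ k ω, 0 < G k ω := fun k ω => Real.exp_pos _
  have hGbdd : ∀ k ω, G k ω ≤ Real.exp ((n : ℝ) * ((1 - lk k) / 2)) := by
    intro k ω
    apply Real.exp_le_exp.mpr
    rw [hexp_eq k ω]
    calc ∑ i ∈ Finset.Icc 1 n,
          (lk k * ξ i ω - (lk k) ^ 2 * (ξ i ω) ^ 2 / (2 * (1 - lk k)))
        ≤ ∑ _i ∈ Finset.Icc 1 n, (1 - lk k) / 2 :=
          Finset.sum_le_sum fun i _ => factor_le (lk k) (ξ i ω) (hlk0 k).le (hlk1 k)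
      _ = (n : ℝ) * ((1 - lk k) / 2) := by
          rw [Finset.sum_const, Nat.card_Icc]
          simp
  have hGmeas : ∀ k, Measurable (G k) := fun k =>
    ((hSm.const_mul (lk k)).sub (hVm.const_mul (fk k))).exp
  have hGint : ∀ k, Integrable (G k) μ := by
    intro k
    refine (integrable_const (Real.exp ((n : ℝ) * ((1 - lk k) / 2)))).mono'
      (hGmeas k).stronglyMeasurable.aestronglyMeasurable ?_
    filter_upwards with ω
    rw [Real.norm_eq_abs, abs_of_pos (hGpos k ω)]
    exact hGbdd k ω
  have hGone : ∀ k, ∫ ω, G k ω ∂μ ≤ 1 := by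
    intro k
    calc ∫ ω, G k ω ∂μ
        = ∫ ω, ∏ i ∈ Finset.Icc 1 n,
            Real.exp (lk k * ξ i ω - (lk k) ^ 2 * (ξ i ω) ^ 2 / (2 * (1 - lk k))) ∂μ := by
          congr 1
          funext ω
          exact hGprod k ω
      _ ≤ 1 := integral_prod_exp_le μ n ℱ ξ hadapted hsq hcond hbdd (lk k)
          (hlk0 k).le (hlk1 k) n le_rfl
  -- slab exponents
  set ek : ℕ → ℝ := fun k => fk k * (bk k * (bk k * r)) with hek'
  set A : ℕ → Set Ω := fun k => {ω | Real.exp (ek k) ≤ G k ω} with hA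
  -- covering
  have hsubset : {ω | x ≤ S ω / Real.sqrt (V ω) ∧ b ≤ Real.sqrt (V ω) ∧
      Real.sqrt (V ω) ≤ b * M} ⊆ ⋃ k ∈ Finset.range K, A k := by
    intro ω hω
    obtain ⟨hx1, hb1, hb2⟩ := hω
    set v : ℝ := Real.sqrt (V ω) with hv
    have hv0 : 0 < v := lt_of_lt_of_le hb hb1
    have hvsq : v ^ 2 = V ω := Real.sq_sqrt (hV0 ω)
    have hSxv : x * v ≤ S ω := by
      rw [le_div_iff₀ hv0] at hx1
      linarith
    have hb0v : bk 0 ≤ v := by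
      have : bk 0 = b := by
        show b * r ^ 0 = b
        simp
      rw [this]
      exact hb1
    obtain ⟨k, hkK, h1, h2⟩ := exists_slab bk v K hKpos hb0v (hb2.trans hcover)
    have h2' : v ≤ bk k * r := by
      have : bk (k + 1) = bk k * r := by
        show b * r ^ (k + 1) = b * r ^ k * r
        rw [pow_succ]
        ring
      rw [this] at h2
      exact h2
    refine Set.mem_iUnion₂.mpr ⟨k, Finset.mem_range.mpr hkK, ?_⟩
    show Real.exp (ek k) ≤ G k ω
    apply Real.exp_le_exp.mpr
    have key : lk k * (x * v) - fk k * v ^ 2 - ek k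
        = fk k * (v - bk k) * (bk k * r - v) := by
      show lk k * (x * v) - fk k * v ^ 2 - fk k * (bk k * (bk k * r)) = _
      linear_combination v * hlxf k
    have hnn : 0 ≤ fk k * (v - bk k) * (bk k * r - v) := by
      apply mul_nonneg (mul_nonneg (hfkpos k).le (by linarith)) (by linarith)
    have hlkS : lk k * (x * v) ≤ lk k * S ω :=
      mul_le_mul_of_nonneg_left hSxv (hlk0 k).le
    have : ek k ≤ lk k * (x * v) - fk k * v ^ 2 := by linarith
    calc ek k ≤ lk k * (x * v) - fk k * v ^ 2 := this
      _ ≤ lk k * S ω - fk k * V ω := by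
          rw [← hvsq]
          linarith
  -- Markov per slab
  have hmarkov : ∀ k, (μ (A k)).toReal ≤ Real.exp (-ek k) := by
    intro k
    have h1 := mul_meas_ge_le_integral_of_nonneg
      (f := G k) (μ := μ)
      (Filter.Eventually.of_forall fun ω => (hGpos k ω).le) (hGint k) (Real.exp (ek k))
    have h2 : Real.exp (ek k) * (μ (A k)).toReal ≤ 1 := le_trans h1 (hGone k)
    have h3 : Real.exp (ek k) * Real.exp (-ek k) = 1 := by
      rw [← Real.exp_add]
      simp
    nlinarith [Real.exp_pos (ek k), ENNReal.toReal_nonneg (a := μ (A k))]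
  -- slab exponent lower bound
  have heklb : ∀ k, x ^ 2 / (2 * (1 + t)) - 1 / 2 ≤ ek k := by
    intro k
    have htk0 : 0 ≤ x / bk k := by positivity
    have htkt : x / bk k ≤ t := by
      rw [ht]
      exact div_le_div_of_nonneg_left hx.le hb (hbkb k)
    have h0 := slab_arith x t (x / bk k) hx htk0 htkt
    rw [← hr] at h0
    rw [show (2:ℝ) + (1 + t) / x = 1 + r by rw [hr]; ring] at h0
    have heq : 2 * x ^ 2 * r / ((1 + r) * ((1 + r) + 2 * (x / bk k))) = ek k := by
      have h1 := hBpos k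
      have h2 : 0 < 2 * x + bk k * (1 + r) := by nlinarith
      have h3 := hbkpos k
      show _ = fk k * (bk k * (bk k * r))
      show _ = 2 * x ^ 2 / ((2 * x + bk k * (1 + r)) * (bk k * (1 + r))) *
        (bk k * (bk k * r))
      have h4 : (0:ℝ) < 1 + r := by linarith
      field_simp
      ring
    calc x ^ 2 / (2 * (1 + t)) - 1 / 2
        ≤ 2 * x ^ 2 * r / ((1 + r) * ((1 + r) + 2 * (x / bk k))) := h0
      _ = ek k := heq
  -- conclusion
  have hsub2 : μ {ω | x ≤ S ω / Real.sqrt (V ω) ∧ b ≤ Real.sqrt (V ω) ∧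
      Real.sqrt (V ω) ≤ b * M} ≤ ∑ k ∈ Finset.range K, μ (A k) :=
    (measure_mono hsubset).trans (measure_biUnion_finset_le _ _)
  have hfin : ∀ k ∈ Finset.range K, μ (A k) ≠ ⊤ := fun k _ => measure_ne_top μ _
  have h2 : (μ {ω | x ≤ S ω / Real.sqrt (V ω) ∧ b ≤ Real.sqrt (V ω) ∧
      Real.sqrt (V ω) ≤ b * M}).toReal ≤ ∑ k ∈ Finset.range K, (μ (A k)).toReal := by
    rw [← ENNReal.toReal_sum hfin]
    exact ENNReal.toReal_mono (ENNReal.sum_ne_top.mpr hfin) hsub2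
  have hperk : ∀ k, (μ (A k)).toReal ≤
      Real.exp (1/2) * Real.exp (-(x ^ 2 / (2 * (1 + t)))) := by
    intro k
    calc (μ (A k)).toReal ≤ Real.exp (-ek k) := hmarkov k
      _ ≤ Real.exp (1/2 + -(x ^ 2 / (2 * (1 + t)))) := by
          apply Real.exp_le_exp.mpr
          have := heklb k
          linarith
      _ = Real.exp (1/2) * Real.exp (-(x ^ 2 / (2 * (1 + t)))) := Real.exp_add _ _
  have hcnn : (0:ℝ) ≤ Real.exp (1/2) * Real.exp (-(x ^ 2 / (2 * (1 + t)))) := by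
    positivity
  have hfinal : (μ {ω | x ≤ S ω / Real.sqrt (V ω) ∧ b ≤ Real.sqrt (V ω) ∧
      Real.sqrt (V ω) ≤ b * M}).toReal ≤
      Real.sqrt (Real.exp 1) * (1 + 2 * (1 + x) * Real.log M) *
        Real.exp (-x ^ 2 / (2 * (1 + t))) := by
    calc (μ {ω | x ≤ S ω / Real.sqrt (V ω) ∧ b ≤ Real.sqrt (V ω) ∧
        Real.sqrt (V ω) ≤ b * M}).toReal
        ≤ ∑ k ∈ Finset.range K, (μ (A k)).toReal := h2
      _ ≤ ∑ _k ∈ Finset.range K,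
            Real.exp (1/2) * Real.exp (-(x ^ 2 / (2 * (1 + t)))) :=
          Finset.sum_le_sum fun k _ => hperk k
      _ = (K : ℝ) * (Real.exp (1/2) * Real.exp (-(x ^ 2 / (2 * (1 + t))))) := by
          rw [Finset.sum_const, Finset.card_range, nsmul_eq_mul]
      _ ≤ (1 + 2 * (1 + x) * Real.log M) *
            (Real.exp (1/2) * Real.exp (-(x ^ 2 / (2 * (1 + t))))) :=
          mul_le_mul_of_nonneg_right hKle hcnn
      _ = Real.sqrt (Real.exp 1) * (1 + 2 * (1 + x) * Real.log M) *
            Real.exp (-x ^ 2 / (2 * (1 + t))) := by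
          rw [sqrt_exp_one, neg_div]
          ring
  exact hfinal
end

section
/- Let (ξ_i)_{i≥1} be i.i.d. random variables with ξ_1 ≥ -1 a.s., E[ξ_1] = 0, E[ξ_1^{2p}] < ∞ for some 1 < p ≤ 2, and σ² = E[ξ_1²]. Let S_n = Σ_{i=1}^n ξ_i and [S]_n = Σ_{i=1}^n ξ_i². Then for all x > 0 and 0 < y < σ²: P(S_n ≥ x[S]_n) ≤ exp{-x²(σ² - y)n/(2(1+x))} + exp{-(p-1)·y^{p/(p-1)}·n/(4·(E[ξ_1^{2p}])^{1/(p-1)})}. -/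
open MeasureTheory ProbabilityTheory Real Finset

lemma aux_log_ge_s19 (w : ℝ) (h0 : 0 < w) (h1 : w ≤ 1) : (w - w⁻¹) / 2 ≤ Real.log w := by
  have hs : 0 ≤ -Real.log w := by
    simpa using neg_nonneg.mpr (Real.log_nonpos h0.le h1)
  have h := Real.self_le_sinh_iff.mpr hs
  rw [Real.sinh_eq, neg_neg, Real.exp_neg, Real.exp_log h0] at h
  linarith

/-- `log (1+z) ≥ z - z²/2` for `z ≥ 0`. -/
lemma aux_log_ge' (z : ℝ) (hz : 0 ≤ z) : z - z ^ 2 / 2 ≤ Real.log (1 + z) := by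
  have hmono : MonotoneOn (fun t : ℝ => Real.log (1 + t) - t + t ^ 2 / 2) (Set.Ici 0) := by
    have hder : ∀ t ∈ Set.Ici (0:ℝ),
        HasDerivAt (fun t : ℝ => Real.log (1 + t) - t + t ^ 2 / 2)
          ((1 + t)⁻¹ - 1 + t) t := by
      intro t ht
      have h1t : (1 : ℝ) + t ≠ 0 := by simp at ht; positivity
      have h1 : HasDerivAt (fun t : ℝ => Real.log (1 + t)) ((1 + t)⁻¹ * 1) t := by
        exact (Real.hasDerivAt_log h1t).comp t ((hasDerivAt_id t).const_add 1)
      have h2 : HasDerivAt (fun t : ℝ => t ^ 2 / 2) (t) t := by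
        have := (hasDerivAt_pow 2 t).div_const 2
        simpa using this
      have := (h1.sub (hasDerivAt_id t)).add h2
      rw [mul_one] at this
      exact this
    apply monotoneOn_of_deriv_nonneg (convex_Ici 0)
    · exact continuousOn_of_forall_continuousAt fun t ht =>
        (hder t ht).continuousAt
    · intro t ht
      rw [interior_Ici] at ht
      exact (hder t (Set.mem_Ici.mpr (le_of_lt (Set.mem_Ioi.mp ht)))).differentiableAt.differentiableWithinAt
    · intro t ht
      rw [interior_Ici] at ht
      rw [(hder t (Set.mem_Ici.mpr (Set.mem_Ioi.mp ht).le)).deriv]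
      have h1t : (0:ℝ) < 1 + t := by linarith [(Set.mem_Ioi.mp ht).le]
      have : (1 + t)⁻¹ - 1 + t = t ^ 2 / (1 + t) := by
        field_simp; ring
      rw [this]
      positivity
  have := hmono (Set.mem_Ici.mpr le_rfl) (Set.mem_Ici.mpr hz) hz
  simp only [add_zero, Real.log_one, zero_pow, ne_eq, OfNat.ofNat_ne_zero,
    not_false_eq_true, zero_div, sub_zero] at this
  linarith [this]

/-- Key pointwise bound: for `u ≥ -1`, `x > 0`,
`exp(x/(1+x)·u - x²/(2(1+x))·u²) ≤ 1 + x/(1+x)·u`. -/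
lemma aux_exp_le (x u : ℝ) (hx : 0 < x) (hu : -1 ≤ u) :
    Real.exp (x / (1 + x) * u - x ^ 2 / (2 * (1 + x)) * u ^ 2) ≤ 1 + x / (1 + x) * u := by
  have h1x : (0:ℝ) < 1 + x := by linarith
  set l : ℝ := x / (1 + x) with hl
  have hl0 : 0 < l := div_pos hx h1x
  have hl1 : l < 1 := by rw [hl, div_lt_one h1x]; linarith
  set z : ℝ := l * u with hz
  have hz1 : -1 < z := by
    have : -l ≤ z := by nlinarith
    linarith
  have hc : x ^ 2 / (2 * (1 + x)) * u ^ 2 = z ^ 2 / (2 * (1 - l)) := by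
    have h1l : 1 - l = 1 / (1 + x) := by rw [hl]; field_simp; ring
    rw [h1l, hz, hl]
    field_simp
  have hkey : z - z ^ 2 / (2 * (1 - l)) ≤ Real.log (1 + z) := by
    rcases le_or_gt 0 z with hzz | hzz
    · refine le_trans ?_ (aux_log_ge' z hzz)
      have : z ^ 2 / 2 ≤ z ^ 2 / (2 * (1 - l)) := by
        apply div_le_div_of_nonneg_left (by positivity) (by nlinarith) (by nlinarith)
      linarith
    · -- z ∈ (-1, 0): use log w ≥ (w - 1/w)/2 with w = 1+z
      have h0w : 0 < 1 + z := by linarith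
      have h1w : 1 + z ≤ 1 := by linarith
      have h := aux_log_ge_s19 (1 + z) h0w h1w
      have heq : ((1+z) - (1+z)⁻¹) / 2 = z - z ^ 2 / (2 * (1 + z)) := by
        field_simp
        ring
      rw [heq] at h
      refine le_trans ?_ h
      have hzl : -l ≤ z := by nlinarith
      have : z ^ 2 / (2 * (1 + z)) ≤ z ^ 2 / (2 * (1 - l)) := by
        apply div_le_div_of_nonneg_left (by positivity) (by nlinarith) (by nlinarith)
      linarith
  calc Real.exp (l * u - x ^ 2 / (2 * (1 + x)) * u ^ 2)
      = Real.exp (z - z ^ 2 / (2 * (1 - l))) := by rw [hc]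
    _ ≤ Real.exp (Real.log (1 + z)) := Real.exp_le_exp.mpr hkey
    _ = 1 + z := Real.exp_log (by linarith)

/-- `exp(-t) ≤ 1 - t + t^p` for `t ≥ 0`, `1 < p ≤ 2` (rpow). -/
lemma aux_exp_neg_le (t p : ℝ) (ht : 0 ≤ t) (hp1 : 1 < p) (hp2 : p ≤ 2) :
    Real.exp (-t) ≤ 1 - t + t ^ p := by
  rcases eq_or_lt_of_le ht with h0 | h0
  · simp [← h0, Real.zero_rpow (by linarith : p ≠ 0)]
  rcases le_or_gt t 1 with h1 | h1
  · have hsq : t ^ (2:ℝ) ≤ t ^ p := Real.rpow_le_rpow_of_exponent_ge h0 h1 hp2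
    have h2 : t ^ (2:ℝ) = t ^ 2 := by
      rw [show ((2:ℝ)) = ((2:ℕ):ℝ) by norm_num, Real.rpow_natCast]
    rw [h2] at hsq
    have hq : Real.exp (-t) ≤ 1 - t + t ^ 2 := by
      have he : (1 + t) * Real.exp (-t) ≤ 1 := by
        rw [Real.exp_neg]
        rw [mul_inv_le_iff₀ (Real.exp_pos t)]
        simpa [add_comm] using Real.add_one_le_exp t
      nlinarith [Real.exp_pos (-t), sq_nonneg t]
    linarith
  · have hle : t ^ (1:ℝ) ≤ t ^ p := Real.rpow_le_rpow_of_exponent_le h1.le hp1.le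
    rw [Real.rpow_one] at hle
    have : Real.exp (-t) ≤ 1 := Real.exp_le_one_iff.mpr (by linarith)
    linarith

/-- `p log p ≤ (p-1)·2 log 2` for `1 < p ≤ 2`, by concavity. -/
lemma aux_plogp (p : ℝ) (hp1 : 1 < p) (hp2 : p ≤ 2) :
    p * Real.log p ≤ (p - 1) * (2 * Real.log 2) := by
  set f : ℝ → ℝ := fun t => (t - 1) * (2 * Real.log 2) - t * Real.log t with hf
  have hder : ∀ t : ℝ, 0 < t → HasDerivAt f (2 * Real.log 2 - (Real.log t + 1)) t := by
    intro t ht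
    have h1 : HasDerivAt (fun t : ℝ => (t - 1) * (2 * Real.log 2)) (2 * Real.log 2) t := by
      simpa using ((hasDerivAt_id t).sub_const 1).mul_const (2 * Real.log 2)
    have h2 : HasDerivAt (fun t : ℝ => t * Real.log t) (Real.log t + 1) t := by
      have := (hasDerivAt_id' t).mul (Real.hasDerivAt_log ht.ne')
      exact this.congr_deriv (by rw [one_mul, mul_inv_cancel₀ ht.ne'])
    exact h1.sub h2
  have hconc : ConcaveOn ℝ (Set.Icc 1 2) f := by
    apply concaveOn_of_hasDerivWithinAt2_nonpos (convex_Icc 1 2)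
      (f' := fun t => 2 * Real.log 2 - (Real.log t + 1)) (f'' := fun t => -(1/t))
    · apply continuousOn_of_forall_continuousAt
      intro t ht
      exact (hder t (by linarith [ht.1])).continuousAt
    · intro t ht
      rw [interior_Icc] at ht
      exact (hder t (by linarith [ht.1])).hasDerivWithinAt
    · intro t ht
      rw [interior_Icc] at ht
      have ht0 : (0:ℝ) < t := by linarith [ht.1]
      have : HasDerivAt (fun s : ℝ => 2 * Real.log 2 - (Real.log s + 1)) (-(1/t)) t := by
        have := ((Real.hasDerivAt_log ht0.ne').add_const 1).const_sub (2 * Real.log 2)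
        simpa [one_div] using this
      exact this.hasDerivWithinAt
    · intro t ht
      rw [interior_Icc] at ht
      have ht0 : (0:ℝ) < t := by linarith [ht.1]
      simp only [neg_nonpos]
      positivity
  -- now use concavity: p = (2-p)•1 + (p-1)•2
  have h1m : (1:ℝ) ∈ Set.Icc (1:ℝ) 2 := by constructor <;> norm_num
  have h2m : (2:ℝ) ∈ Set.Icc (1:ℝ) 2 := by constructor <;> norm_num
  have hcomb := hconc.2 h1m h2m (show (0:ℝ) ≤ 2 - p by linarith) (show (0:ℝ) ≤ p - 1 by linarith) (by ring)
  have hf1 : f 1 = 0 := by simp [hf]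
  have hf2 : f 2 = 0 := by simp [hf]; ring
  have harg : (2 - p) • (1:ℝ) + (p - 1) • (2:ℝ) = p := by
    simp [smul_eq_mul]; ring
  rw [harg, hf1, hf2] at hcomb
  simp only [smul_eq_mul, mul_zero, add_zero] at hcomb
  have : 0 ≤ f p := hcomb
  rw [hf] at this
  simp only at this
  linarith

lemma aux_rpow_le_four (p : ℝ) (hp1 : 1 < p) (hp2 : p ≤ 2) :
    p ^ (p / (p - 1)) ≤ 4 := by
  have hp0 : (0:ℝ) < p := by linarith
  have hpm : (0:ℝ) < p - 1 := by linarith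
  have h := aux_plogp p hp1 hp2
  have hlog : Real.log p * (p / (p - 1)) ≤ Real.log 4 := by
    have h4 : Real.log 4 = 2 * Real.log 2 := by
      rw [show (4:ℝ) = 2^2 by norm_num, Real.log_pow]; push_cast; ring
    rw [h4, ← sub_nonneg]
    have key : 2 * Real.log 2 - Real.log p * (p / (p - 1)) =
        ((p - 1) * (2 * Real.log 2) - p * Real.log p) / (p - 1) := by
      field_simp
    rw [key]
    apply div_nonneg (by linarith) hpm.le
  calc p ^ (p / (p - 1)) = Real.exp (Real.log p * (p / (p - 1))) :=
        Real.rpow_def_of_pos hp0 _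
    _ ≤ Real.exp (Real.log 4) := Real.exp_le_exp.mpr hlog
    _ = 4 := Real.exp_log (by norm_num)

lemma aux_opt (p y A : ℝ) (hp1 : 1 < p) (hp2 : p ≤ 2) (hy : 0 < y) (hA : 0 < A) :
    -((y / (p * A)) ^ (1 / (p - 1)) * y) + ((y / (p * A)) ^ (1 / (p - 1))) ^ p * A ≤
      -((p - 1) * y ^ (p / (p - 1))) / (4 * A ^ (1 / (p - 1))) := by
  have hp0 : (0:ℝ) < p := by linarith
  have hpm : (0:ℝ) < p - 1 := by linarith
  set r : ℝ := 1 / (p - 1) with hr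
  set B : ℝ := y / (p * A) with hB
  have hB0 : 0 < B := div_pos hy (by positivity)
  have hrp : r * p = r + 1 := by rw [hr]; field_simp; ring
  have hq : p / (p - 1) = r + 1 := by rw [hr]; field_simp; ring
  have hlp : (B ^ r) ^ p = B ^ r * B := by
    rw [← Real.rpow_mul hB0.le, hrp, Real.rpow_add hB0, Real.rpow_one]
  rw [hlp, hq]
  have hBrA : B ^ r * B * A = B ^ r * (y / p) := by
    rw [hB]; field_simp
  have hBr : B ^ r = y ^ r / (p ^ r * A ^ r) := by
    rw [hB, Real.div_rpow hy.le (by positivity), Real.mul_rpow hp0.le hA.le]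
  -- LHS = -(B^r * y) + B^r * (y/p) = -B^r * y * (p-1)/p
  have hLHS : -(B ^ r * y) + B ^ r * B * A = -(B ^ r * y * (p - 1) / p) := by
    rw [hBrA]; field_simp; ring
  rw [hLHS]
  rw [neg_div, neg_le_neg_iff]
  -- goal: (p-1) * y^(r+1) / (4 * A^r) ≤ B^r * y * (p-1)/p
  have hyr1 : y ^ (r + 1) = y ^ r * y := by rw [Real.rpow_add hy, Real.rpow_one]
  have hpr1 : p ^ (r + 1) = p ^ r * p := by rw [Real.rpow_add hp0, Real.rpow_one]
  have hp4 : p ^ (r + 1) ≤ 4 := by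
    have := aux_rpow_le_four p hp1 hp2
    rwa [hq] at this
  have hpos : 0 < p ^ (r + 1) := Real.rpow_pos_of_pos hp0 _
  have hAr : (0:ℝ) < A ^ r := Real.rpow_pos_of_pos hA _
  have hyrpos : (0:ℝ) < y ^ r := Real.rpow_pos_of_pos hy _
  rw [hBr, hyr1]
  have hR : y ^ r / (p ^ r * A ^ r) * y * (p - 1) / p =
      (p - 1) * (y ^ r * y) / (p ^ (r + 1) * A ^ r) := by
    rw [hpr1]; field_simp
  rw [hR]
  apply div_le_div_of_nonneg_left (by positivity) (by positivity)
  exact mul_le_mul_of_nonneg_right hp4 hAr.le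

set_option maxHeartbeats 1000000 in
/-- For i.i.d. `(ξ_i)` with `ξ_1 ≥ -1` a.s., `E[ξ_1] = 0`, `E[|ξ_1|^{2p}] < ∞` for
some `1 < p ≤ 2`, and `σ² = E[ξ_1²]`: for all `x > 0` and `0 < y < σ²`,
`P(S_n ≥ x[S]_n) ≤ exp{-x²(σ² - y)n/(2(1+x))}
  + exp{-(p-1) y^{p/(p-1)} n / (4 (E[|ξ_1|^{2p}])^{1/(p-1)})}`. -/
theorem iid_selfNormalized_bernstein {Ω : Type*} {m0 : MeasurableSpace Ω}
    (μ : Measure Ω) [IsProbabilityMeasure μ] (ξ : ℕ → Ω → ℝ)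
    (hmeas : ∀ i, Measurable (ξ i))
    (hindep : iIndepFun ξ μ)
    (hident : ∀ i, IdentDistrib (ξ i) (ξ 0) μ μ)
    (hbdd : ∀ᵐ ω ∂μ, -1 ≤ ξ 0 ω)
    (hmean : ∫ ω, ξ 0 ω ∂μ = 0)
    (p : ℝ) (hp1 : 1 < p) (hp2 : p ≤ 2)
    (hmom : MemLp (ξ 0) (ENNReal.ofReal (2 * p)) μ)
    (σ2 : ℝ) (hσ2 : σ2 = ∫ ω, (ξ 0 ω) ^ 2 ∂μ)
    (n : ℕ) (x y : ℝ) (hx : 0 < x) (hy0 : 0 < y) (hyσ : y < σ2) :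
    (μ {ω | x * ∑ i ∈ Finset.range n, (ξ i ω) ^ 2 ≤ ∑ i ∈ Finset.range n, ξ i ω}).toReal ≤
      Real.exp (-(x ^ 2 * (σ2 - y)) / (2 * (1 + x)) * n) +
      Real.exp (-((p - 1) * y ^ (p / (p - 1))) /
        (4 * (∫ ω, |ξ 0 ω| ^ (2 * p) ∂μ) ^ (1 / (p - 1))) * n) := by
  have h1x : (0:ℝ) < 1 + x := by linarith
  have hσy : 0 < σ2 - y := by linarith
  set l : ℝ := x / (1 + x) with hl
  set c : ℝ := x ^ 2 / (2 * (1 + x)) with hc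
  have hl0 : 0 < l := div_pos hx h1x
  have hc0 : 0 < c := by positivity
  set A : ℝ := ∫ ω, |ξ 0 ω| ^ (2 * p) ∂μ with hA
  -- integrability facts
  have h2p1 : (1 : ENNReal) ≤ ENNReal.ofReal (2 * p) := by
    rw [show (1 : ENNReal) = ENNReal.ofReal 1 by simp]
    exact ENNReal.ofReal_le_ofReal (by linarith)
  have hξint : Integrable (ξ 0) μ := hmom.integrable h2p1
  have hint2p : Integrable (fun ω => |ξ 0 ω| ^ (2 * p)) μ := by
    have := hmom.integrable_norm_rpow (by simp; positivity) ENNReal.ofReal_ne_top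
    simpa [ENNReal.toReal_ofReal (by positivity : (0:ℝ) ≤ 2 * p), ENNReal.toReal_ofReal (by positivity : (0:ℝ) ≤ p), Real.norm_eq_abs] using this
  have hintsq : Integrable (fun ω => (ξ 0 ω) ^ 2) μ := by
    refine Integrable.mono' ((integrable_const 1).add hint2p)
      (((hmeas 0).pow_const 2).aestronglyMeasurable) (ae_of_all _ fun ω => ?_)
    rw [Real.norm_eq_abs, abs_of_nonneg (sq_nonneg _)]
    simp only [Pi.add_apply]
    rcases le_or_gt (|ξ 0 ω|) 1 with h | h
    · have : (ξ 0 ω) ^ 2 ≤ 1 := by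
        rw [← sq_abs]; nlinarith [abs_nonneg (ξ 0 ω)]
      have h2 : (0:ℝ) ≤ |ξ 0 ω| ^ (2 * p) := Real.rpow_nonneg (abs_nonneg _) _
      linarith
    · have h1 : (ξ 0 ω) ^ 2 = |ξ 0 ω| ^ ((2:ℝ)) := by
        rw [← sq_abs, ← Real.rpow_natCast (|ξ 0 ω|) 2]; norm_num
      have h2 : |ξ 0 ω| ^ ((2:ℝ)) ≤ |ξ 0 ω| ^ (2 * p) :=
        Real.rpow_le_rpow_of_exponent_le h.le (by nlinarith)
      have h3 : (0:ℝ) ≤ |ξ 0 ω| ^ (2 * p) := Real.rpow_nonneg (abs_nonneg _) _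
      linarith [h1 ▸ h2]
  -- A > 0
  have hA0 : 0 < A := by
    rcases (integral_nonneg (f := fun ω => |ξ 0 ω| ^ (2 * p)) (fun ω => Real.rpow_nonneg (abs_nonneg _) _)).eq_or_lt with h0 | h0
    · exfalso
      have hzero : ∀ᵐ ω ∂μ, |ξ 0 ω| ^ (2 * p) = 0 := by
        have := (integral_eq_zero_iff_of_nonneg
          (fun ω => Real.rpow_nonneg (abs_nonneg _) _) hint2p).mp h0.symm
        filter_upwards [this] with ω hω using hω
      have hz2 : ∀ᵐ ω ∂μ, (ξ 0 ω) ^ 2 = 0 := by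
        filter_upwards [hzero] with ω hω
        have : |ξ 0 ω| = 0 := by
          by_contra hne
          have habs : 0 < |ξ 0 ω| := lt_of_le_of_ne (abs_nonneg _) (Ne.symm hne)
          exact absurd hω (ne_of_gt (Real.rpow_pos_of_pos habs _))
        rw [← sq_abs, this]; ring
      have : σ2 = 0 := by
        rw [hσ2, integral_congr_ae hz2, integral_zero]
      linarith
    · exact h0
  set lam : ℝ := (y / (p * A)) ^ (1 / (p - 1)) with hlam
  have hlam0 : 0 < lam := Real.rpow_pos_of_pos (div_pos hy0 (by positivity)) _
  -- the two summand families
  set g1 : ℝ → ℝ := fun u => l * u - c * u ^ 2 with hg1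
  set g2 : ℝ → ℝ := fun u => -lam * u ^ 2 with hg2
  have hg1m : Measurable g1 := by fun_prop
  have hg2m : Measurable g2 := by fun_prop
  set F : ℕ → Ω → ℝ := fun i => g1 ∘ ξ i with hF
  set G : ℕ → Ω → ℝ := fun i => g2 ∘ ξ i with hG
  have hFmeas : ∀ i, Measurable (F i) := fun i => hg1m.comp (hmeas i)
  have hGmeas : ∀ i, Measurable (G i) := fun i => hg2m.comp (hmeas i)
  have hFind : iIndepFun F μ := hindep.comp _ (fun _ => hg1m)
  have hGind : iIndepFun G μ := hindep.comp _ (fun _ => hg2m)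
  set ε₁ : ℝ := c * ((σ2 - y) * n) with hε₁
  set ε₂ : ℝ := -(lam * ((σ2 - y) * n)) with hε₂
  -- inclusion
  have hsub : {ω | x * ∑ i ∈ Finset.range n, (ξ i ω) ^ 2 ≤ ∑ i ∈ Finset.range n, ξ i ω} ⊆
      {ω | ε₁ ≤ (∑ i ∈ Finset.range n, F i) ω} ∪ {ω | ε₂ ≤ (∑ i ∈ Finset.range n, G i) ω} := by
    intro ω hω
    simp only [Set.mem_setOf_eq] at hω
    set Q : ℝ := ∑ i ∈ Finset.range n, (ξ i ω) ^ 2 with hQ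
    set S : ℝ := ∑ i ∈ Finset.range n, ξ i ω with hS
    have hQ0 : 0 ≤ Q := Finset.sum_nonneg fun i _ => sq_nonneg _
    have hFsum : (∑ i ∈ Finset.range n, F i) ω = l * S - c * Q := by
      simp only [Finset.sum_apply, hF, hg1, Function.comp_apply, hS, hQ]
      rw [Finset.mul_sum, Finset.mul_sum, ← Finset.sum_sub_distrib]
    have hGsum : (∑ i ∈ Finset.range n, G i) ω = -lam * Q := by
      simp only [Finset.sum_apply, hG, hg2, Function.comp_apply, hQ]
      rw [Finset.mul_sum]
    rcases le_or_gt ((σ2 - y) * n) Q with h | h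
    · left
      simp only [Set.mem_setOf_eq, hFsum, hε₁]
      have hlx : l * x = 2 * c := by rw [hl, hc]; field_simp
      nlinarith [mul_le_mul_of_nonneg_left hω hl0.le]
    · right
      simp only [Set.mem_setOf_eq, hGsum, hε₂]
      nlinarith
  -- measure split
  have hsplit : (μ {ω | x * ∑ i ∈ Finset.range n, (ξ i ω) ^ 2 ≤ ∑ i ∈ Finset.range n, ξ i ω}).toReal ≤
      (μ {ω | ε₁ ≤ (∑ i ∈ Finset.range n, F i) ω}).toReal +
      (μ {ω | ε₂ ≤ (∑ i ∈ Finset.range n, G i) ω}).toReal := by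
    have h1 := (measure_mono (μ := μ) hsub).trans (measure_union_le _ _)
    calc (μ {ω | x * ∑ i ∈ Finset.range n, (ξ i ω) ^ 2 ≤ ∑ i ∈ Finset.range n, ξ i ω}).toReal ≤ ((μ {ω | ε₁ ≤ (∑ i ∈ Finset.range n, F i) ω}) +
          (μ {ω | ε₂ ≤ (∑ i ∈ Finset.range n, G i) ω})).toReal :=
        ENNReal.toReal_mono (by finiteness) h1
      _ = _ := ENNReal.toReal_add (by finiteness) (by finiteness)
  -- ### Bound 1
  have hFbd : ∀ i ω, F i ω ≤ l ^ 2 / (4 * c) := by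
    intro i ω
    show l * ξ i ω - c * ξ i ω ^ 2 ≤ l ^ 2 / (4 * c)
    rw [le_div_iff₀ (by positivity)]
    nlinarith [sq_nonneg (2 * c * ξ i ω - l)]
  have hsumFapp : ∀ ω, (∑ i ∈ Finset.range n, F i) ω = ∑ i ∈ Finset.range n, F i ω :=
    fun ω => Finset.sum_apply ω (Finset.range n) F
  have hsumFm : Measurable (∑ i ∈ Finset.range n, F i) := by
    have h1 : Measurable (fun ω => ∑ i ∈ Finset.range n, F i ω) :=
      Finset.measurable_sum _ (fun i _ => hFmeas i)
    have : (∑ i ∈ Finset.range n, F i) = fun ω => ∑ i ∈ Finset.range n, F i ω := by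
      funext ω; exact hsumFapp ω
    rw [this]; exact h1
  have hint1 : Integrable (fun ω => Real.exp (1 * (∑ i ∈ Finset.range n, F i) ω)) μ := by
    refine Integrable.mono' (integrable_const (Real.exp (n * (l ^ 2 / (4 * c)))))
      ((measurable_const.mul hsumFm).exp.aestronglyMeasurable)
      (ae_of_all _ fun ω => ?_)
    rw [Real.norm_eq_abs, Real.abs_exp, one_mul, Real.exp_le_exp]
    calc (∑ i ∈ Finset.range n, F i) ω = ∑ i ∈ Finset.range n, F i ω := hsumFapp ω
      _ ≤ ∑ _i ∈ Finset.range n, l ^ 2 / (4 * c) :=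
          Finset.sum_le_sum fun i _ => hFbd i ω
      _ = n * (l ^ 2 / (4 * c)) := by
          rw [Finset.sum_const, Finset.card_range, nsmul_eq_mul]
  have hmgfF : ∀ i, mgf (F i) μ 1 = mgf (F 0) μ 1 := by
    intro i
    have hid : IdentDistrib (F i) (F 0) μ μ := (hident i).comp hg1m
    have := (hid.comp (Measurable.exp (measurable_const.mul measurable_id))
      (u := fun v : ℝ => Real.exp (1 * v))).integral_eq
    simpa [mgf, Function.comp] using this
  have hmgf0 : mgf (F 0) μ 1 ≤ 1 := by
    have hptw : ∀ᵐ ω ∂μ, Real.exp (1 * F 0 ω) ≤ 1 + l * ξ 0 ω := by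
      filter_upwards [hbdd] with ω hω
      have h := aux_exp_le x (ξ 0 ω) hx hω
      rw [← hl, ← hc] at h
      simpa [hF, hg1, one_mul] using h
    have hintexp : Integrable (fun ω => Real.exp (1 * F 0 ω)) μ := by
      refine Integrable.mono' (integrable_const (Real.exp (l ^ 2 / (4 * c))))
        ((measurable_const.mul (hFmeas 0)).exp.aestronglyMeasurable)
        (ae_of_all _ fun ω => ?_)
      rw [Real.norm_eq_abs, Real.abs_exp, one_mul, Real.exp_le_exp]
      exact hFbd 0 ω
    have hintlin : Integrable (fun ω => 1 + l * ξ 0 ω) μ :=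
      (integrable_const 1).add (hξint.const_mul l)
    have hle := integral_mono_ae hintexp hintlin hptw
    calc mgf (F 0) μ 1 = ∫ ω, Real.exp (1 * F 0 ω) ∂μ := rfl
      _ ≤ ∫ ω, (1 + l * ξ 0 ω) ∂μ := hle
      _ = 1 := by
          rw [integral_add (integrable_const 1) (hξint.const_mul l),
            integral_const, MeasureTheory.integral_const_mul, hmean]
          simp
  have hb1 : (μ {ω | ε₁ ≤ (∑ i ∈ Finset.range n, F i) ω}).toReal ≤
      Real.exp (-(x ^ 2 * (σ2 - y)) / (2 * (1 + x)) * n) := by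
    have hch := measure_ge_le_exp_mul_mgf (μ := μ) (X := ∑ i ∈ Finset.range n, F i)
      (t := 1) ε₁ zero_le_one hint1
    have hprod := hFind.mgf_sum (t := 1) hFmeas (Finset.range n)
    calc (μ {ω | ε₁ ≤ (∑ i ∈ Finset.range n, F i) ω}).toReal
        ≤ Real.exp (-1 * ε₁) * mgf (∑ i ∈ Finset.range n, F i) μ 1 := hch
      _ = Real.exp (-1 * ε₁) * (mgf (F 0) μ 1) ^ n := by
          rw [hprod, Finset.prod_congr rfl (fun i _ => hmgfF i), Finset.prod_const,
            Finset.card_range]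
      _ ≤ Real.exp (-1 * ε₁) * 1 := by
          apply mul_le_mul_of_nonneg_left _ (Real.exp_pos _).le
          exact pow_le_one₀ mgf_nonneg hmgf0
      _ = Real.exp (-(x ^ 2 * (σ2 - y)) / (2 * (1 + x)) * n) := by
          rw [mul_one]
          congr 1
          rw [hε₁, hc]
          ring
  -- ### Bound 2
  have hsumGapp : ∀ ω, (∑ i ∈ Finset.range n, G i) ω = ∑ i ∈ Finset.range n, G i ω :=
    fun ω => Finset.sum_apply ω (Finset.range n) G
  have hsumGm : Measurable (∑ i ∈ Finset.range n, G i) := by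
    have h1 : Measurable (fun ω => ∑ i ∈ Finset.range n, G i ω) :=
      Finset.measurable_sum _ (fun i _ => hGmeas i)
    have : (∑ i ∈ Finset.range n, G i) = fun ω => ∑ i ∈ Finset.range n, G i ω := by
      funext ω; exact hsumGapp ω
    rw [this]; exact h1
  have hGbd : ∀ i ω, G i ω ≤ 0 := by
    intro i ω
    show -lam * ξ i ω ^ 2 ≤ 0
    nlinarith [sq_nonneg (ξ i ω)]
  have hint2 : Integrable (fun ω => Real.exp (1 * (∑ i ∈ Finset.range n, G i) ω)) μ := by
    refine Integrable.mono' (integrable_const 1)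
      ((measurable_const.mul hsumGm).exp.aestronglyMeasurable)
      (ae_of_all _ fun ω => ?_)
    rw [Real.norm_eq_abs, Real.abs_exp, one_mul]
    rw [show (1:ℝ) = Real.exp 0 by simp, Real.exp_le_exp]
    rw [hsumGapp ω]
    exact Finset.sum_nonpos fun i _ => hGbd i ω
  have hmgfG : ∀ i, mgf (G i) μ 1 = mgf (G 0) μ 1 := by
    intro i
    have hid : IdentDistrib (G i) (G 0) μ μ := (hident i).comp hg2m
    have := (hid.comp (Measurable.exp (measurable_const.mul measurable_id))
      (u := fun v : ℝ => Real.exp (1 * v))).integral_eq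
    simpa [mgf, Function.comp] using this
  set u0 : ℝ := -(lam * σ2) + lam ^ p * A with hu0
  have hmgfG0 : mgf (G 0) μ 1 ≤ Real.exp u0 := by
    have hptw : ∀ ω, Real.exp (1 * G 0 ω) ≤
        1 - lam * (ξ 0 ω) ^ 2 + lam ^ p * |ξ 0 ω| ^ (2 * p) := by
      intro ω
      have ht0 : 0 ≤ lam * (ξ 0 ω) ^ 2 := by positivity
      have h := aux_exp_neg_le (lam * (ξ 0 ω) ^ 2) p ht0 hp1 hp2
      have hrw : (lam * (ξ 0 ω) ^ 2) ^ p = lam ^ p * |ξ 0 ω| ^ (2 * p) := by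
        rw [Real.mul_rpow hlam0.le (sq_nonneg _)]
        congr 1
        rw [← sq_abs, ← Real.rpow_natCast (|ξ 0 ω|) 2, ← Real.rpow_mul (abs_nonneg _)]
        norm_num
      rw [hrw] at h
      refine le_trans (le_of_eq ?_) h
      show Real.exp (1 * (-lam * ξ 0 ω ^ 2)) = _
      congr 1
      ring
    have hintexp : Integrable (fun ω => Real.exp (1 * G 0 ω)) μ := by
      refine Integrable.mono' (integrable_const 1)
        ((measurable_const.mul (hGmeas 0)).exp.aestronglyMeasurable)
        (ae_of_all _ fun ω => ?_)
      rw [Real.norm_eq_abs, Real.abs_exp, one_mul,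
        show (1:ℝ) = Real.exp 0 by simp, Real.exp_le_exp]
      exact hGbd 0 ω
    have hintrhs : Integrable
        (fun ω => 1 - lam * (ξ 0 ω) ^ 2 + lam ^ p * |ξ 0 ω| ^ (2 * p)) μ :=
      ((integrable_const 1).sub (hintsq.const_mul lam)).add (hint2p.const_mul (lam ^ p))
    have hle := integral_mono_ae hintexp hintrhs (ae_of_all _ hptw)
    calc mgf (G 0) μ 1 = ∫ ω, Real.exp (1 * G 0 ω) ∂μ := rfl
      _ ≤ ∫ ω, (1 - lam * (ξ 0 ω) ^ 2 + lam ^ p * |ξ 0 ω| ^ (2 * p)) ∂μ := hle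
      _ = 1 - lam * σ2 + lam ^ p * A := by
          have h1 : Integrable (fun ω => 1 - lam * (ξ 0 ω) ^ 2) μ :=
            (integrable_const 1).sub (hintsq.const_mul lam)
          rw [integral_add h1 (hint2p.const_mul (lam ^ p)),
            integral_sub (integrable_const 1) (hintsq.const_mul lam),
            integral_const, MeasureTheory.integral_const_mul,
            MeasureTheory.integral_const_mul, ← hσ2, ← hA]
          simp
      _ ≤ Real.exp u0 := by
          have := Real.add_one_le_exp u0
          rw [hu0] at this ⊢
          linarith
  have hb2 : (μ {ω | ε₂ ≤ (∑ i ∈ Finset.range n, G i) ω}).toReal ≤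
      Real.exp (-((p - 1) * y ^ (p / (p - 1))) /
        (4 * A ^ (1 / (p - 1))) * n) := by
    have hch := measure_ge_le_exp_mul_mgf (μ := μ) (X := ∑ i ∈ Finset.range n, G i)
      (t := 1) ε₂ zero_le_one hint2
    have hprod := hGind.mgf_sum (t := 1) hGmeas (Finset.range n)
    have hexpn : (Real.exp u0) ^ n = Real.exp (n * u0) := (Real.exp_nat_mul u0 n).symm
    have hopt := aux_opt p y A hp1 hp2 hy0 hA0
    rw [← hlam] at hopt
    calc (μ {ω | ε₂ ≤ (∑ i ∈ Finset.range n, G i) ω}).toReal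
        ≤ Real.exp (-1 * ε₂) * mgf (∑ i ∈ Finset.range n, G i) μ 1 := hch
      _ = Real.exp (-1 * ε₂) * (mgf (G 0) μ 1) ^ n := by
          rw [hprod, Finset.prod_congr rfl (fun i _ => hmgfG i), Finset.prod_const,
            Finset.card_range]
      _ ≤ Real.exp (-1 * ε₂) * (Real.exp u0) ^ n := by
          apply mul_le_mul_of_nonneg_left _ (Real.exp_pos _).le
          exact pow_le_pow_left₀ mgf_nonneg hmgfG0 n
      _ = Real.exp (-1 * ε₂ + n * u0) := by rw [hexpn, ← Real.exp_add]
      _ = Real.exp ((-(lam * y) + lam ^ p * A) * n) := by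
          congr 1
          rw [hε₂, hu0]
          ring
      _ ≤ Real.exp (-((p - 1) * y ^ (p / (p - 1))) / (4 * A ^ (1 / (p - 1))) * n) := by
          rw [Real.exp_le_exp]
          exact mul_le_mul_of_nonneg_right hopt (Nat.cast_nonneg n)
  linarith [hsplit, hb1, hb2]
end
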